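/- Let U ⊆ ℂ be open, g : U → ℂ holomorphic, η : U → ℂ holomorphic, and let c_τ : [0,1] → U for τ ∈ (0,1] be a family of piecewise smooth paths converging uniformly (together with derivatives, in the piecewise sense) to a path c : [0,1] → ℂ with c((0,1)) ⊆ U and endpoints c(0), c(1) possibly on the boundary ∂U. If η(c_τ(i)) e^(g(c_τ(i))) → 0 as τ → 0 for each endpoint i ∈ {0,1} at which c(i) ∈ ∂U, and the integrals ∫_{c_τ} (∇η) e^g converge to ∫_c (∇η) e^g, then ∫_c (∇η) e^g equals the sum over endpoints c(i) ∈ U of (−1)^(i+1) η(c(i)) e^(g(c(i))). -/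

import Mathlib

/-!
Each path `c_τ` stays inside `U`, where `η e^g` is a primitive of `(∇η) e^g`, so the fundamental
theorem of calculus evaluates `∫_{c_τ} (∇η) e^g` as the difference of `η e^g` at the endpoints of
`c_τ`. Letting `τ → 0`, an endpoint term converges to `η e^g (c i)` by continuity when `c i ∈ U`,
and to `0` by the decay hypothesis when `c i ∈ ∂U`; uniqueness of limits identifies `L`.
-/

open Set Filter Topology

section TwistedStokes

variable {U : Set ℂ} {g η : ℂ → ℂ}

/-- The paper's `∇η`, chosen so that `(η e^g)' = (∇η) e^g`. -/
noncomputable def twistedDeriv (g η : ℂ → ℂ) (z : ℂ) : ℂ :=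
  deriv η z + deriv g z * η z

lemma HasDerivAt.mul_cexp_comp {γ : ℝ → ℂ} {γ' : ℂ} {t : ℝ}
    (hg : DifferentiableAt ℂ g (γ t)) (hη : DifferentiableAt ℂ η (γ t))
    (hγ : HasDerivAt γ γ' t) :
    HasDerivAt (fun s => η (γ s) * Complex.exp (g (γ s)))
      (twistedDeriv g η (γ t) * Complex.exp (g (γ t)) * γ') t := by
  have hη' := hη.hasDerivAt.comp t hγ
  have hexp := hg.hasDerivAt.cexp.comp t hγ
  refine (hη'.mul hexp).congr_deriv ?_
  simp only [twistedDeriv, Function.comp_apply]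
  ring

lemma continuousOn_twistedDeriv_mul_cexp (hU : IsOpen U)
    (hg : DifferentiableOn ℂ g U) (hη : DifferentiableOn ℂ η U) :
    ContinuousOn (fun z => twistedDeriv g η z * Complex.exp (g z)) U := by
  have hg' := (hg.analyticOnNhd hU).deriv.continuousOn
  have hη' := (hη.analyticOnNhd hU).deriv.continuousOn
  exact (hη'.add (hg'.mul hη.continuousOn)).mul
    (Complex.continuous_exp.comp_continuousOn hg.continuousOn)

theorem integral_twistedDeriv_mul_cexp_eq_sub (hU : IsOpen U)
    (hg : DifferentiableOn ℂ g U) (hη : DifferentiableOn ℂ η U)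
    {γ γ' : ℝ → ℂ} {a b : ℝ} (hγU : ∀ t ∈ uIcc a b, γ t ∈ U)
    (hγ : ∀ t ∈ uIcc a b, HasDerivAt γ (γ' t) t) (hγ' : ContinuousOn γ' (uIcc a b)) :
    ∫ t in a..b, twistedDeriv g η (γ t) * Complex.exp (g (γ t)) * γ' t
      = η (γ b) * Complex.exp (g (γ b)) - η (γ a) * Complex.exp (g (γ a)) := by
  have hderiv : ∀ t ∈ uIcc a b, HasDerivAt (fun s => η (γ s) * Complex.exp (g (γ s)))
      (twistedDeriv g η (γ t) * Complex.exp (g (γ t)) * γ' t) t := fun t ht =>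
    .mul_cexp_comp (hg.differentiableAt (hU.mem_nhds (hγU t ht)))
      (hη.differentiableAt (hU.mem_nhds (hγU t ht))) (hγ t ht)
  have hγcont : ContinuousOn γ (uIcc a b) := fun t ht => (hγ t ht).continuousAt.continuousWithinAt
  refine intervalIntegral.integral_eq_sub_of_hasDerivAt hderiv (ContinuousOn.intervalIntegrable ?_)
  exact ((continuousOn_twistedDeriv_mul_cexp hU hg hη).comp hγcont hγU).mul hγ'

end TwistedStokes

theorem tendsto_indicator_of_mem_or_mem_frontier {X E α : Type*} [TopologicalSpace X]
    [AddCommMonoid E] [TopologicalSpace E] {U : Set X} (hU : IsOpen U) {F : X → E}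
    (hF : ContinuousOn F U) {l : Filter α} {z : α → X} {z₀ : X} (hz : Tendsto z l (𝓝 z₀))
    (hz₀ : z₀ ∈ U ∨ z₀ ∈ frontier U)
    (hvanish : z₀ ∈ frontier U → Tendsto (fun τ => F (z τ)) l (𝓝 0)) :
    Tendsto (fun τ => F (z τ)) l (𝓝 (U.indicator F z₀)) := by
  rcases hz₀ with hmem | hfr
  · rw [indicator_of_mem hmem]
    exact ((hF z₀ hmem).continuousAt (hU.mem_nhds hmem)).tendsto.comp hz
  · rw [indicator_of_notMem (hU.frontier_eq ▸ hfr).2]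
    exact hvanish hfr

theorem stmt5_general (U : Set ℂ) (hU : IsOpen U) (g η : ℂ → ℂ)
    (hg : DifferentiableOn ℂ g U) (hη : DifferentiableOn ℂ η U)
    (c : ℝ → ℂ)
    (cτ cτ' : ℝ → ℝ → ℂ)
    (hτU : ∀ τ ∈ Ioc (0:ℝ) 1, ∀ t ∈ Icc (0:ℝ) 1, cτ τ t ∈ U)
    (hτderiv : ∀ τ ∈ Ioc (0:ℝ) 1, ∀ t ∈ Icc (0:ℝ) 1, HasDerivAt (cτ τ) (cτ' τ t) t)
    (hτcont : ∀ τ ∈ Ioc (0:ℝ) 1, ContinuousOn (cτ' τ) (Icc 0 1))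
    (hend : ∀ i ∈ ({0, 1} : Set ℝ),
      Tendsto (fun τ => cτ τ i) (nhdsWithin 0 (Ioc 0 1)) (nhds (c i)))
    (hin : ∀ i ∈ ({0, 1} : Set ℝ), c i ∈ U ∨ c i ∈ frontier U)
    (hvanish : ∀ i ∈ ({0, 1} : Set ℝ), c i ∈ frontier U →
      Tendsto (fun τ => η (cτ τ i) * Complex.exp (g (cτ τ i)))
        (nhdsWithin 0 (Ioc 0 1)) (nhds 0))
    (L : ℂ)
    (hlim : Tendsto (fun τ => ∫ t in (0:ℝ)..1,
        (deriv η (cτ τ t) + deriv g (cτ τ t) * η (cτ τ t)) *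
          Complex.exp (g (cτ τ t)) * cτ' τ t)
      (nhdsWithin 0 (Ioc 0 1)) (nhds L)) :
    L = Set.indicator U (fun z => η z * Complex.exp (g z)) (c 1)
      - Set.indicator U (fun z => η z * Complex.exp (g z)) (c 0) := by
  set F : ℂ → ℂ := fun z => η z * Complex.exp (g z)
  have hF : ContinuousOn F U :=
    hη.continuousOn.mul (Complex.continuous_exp.comp_continuousOn hg.continuousOn)
  have hendpoint : ∀ i ∈ ({0, 1} : Set ℝ),
      Tendsto (fun τ => F (cτ τ i)) (𝓝[Ioc 0 1] 0) (𝓝 (U.indicator F (c i))) := fun i hi =>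
    tendsto_indicator_of_mem_or_mem_frontier hU hF (hend i hi) (hin i hi) (hvanish i hi)
  have hstokes : ∀ τ ∈ Ioc (0:ℝ) 1, F (cτ τ 1) - F (cτ τ 0) =
      ∫ t in (0:ℝ)..1, twistedDeriv g η (cτ τ t) * Complex.exp (g (cτ τ t)) * cτ' τ t := by
    intro τ hτ
    have hI : uIcc (0:ℝ) 1 = Icc 0 1 := uIcc_of_le zero_le_one
    exact (integral_twistedDeriv_mul_cexp_eq_sub hU hg hη (hI ▸ hτU τ hτ) (hI ▸ hτderiv τ hτ)
      (hI ▸ hτcont τ hτ)).symm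
  have := left_nhdsWithin_Ioc_neBot (zero_lt_one' ℝ)
  refine tendsto_nhds_unique hlim (((hendpoint 1 (by simp)).sub (hendpoint 0 (by simp))).congr' ?_)
  filter_upwards [self_mem_nhdsWithin] with τ hτ using hstokes τ hτ

/-- The limit Stokes formula in dimension one: if the paths `c_τ` inside `U` converge
to a path `c` whose endpoints may lie on the boundary of `U`, and `η e^g` tends to `0`
along the endpoints lying on the boundary, then the limit of the twisted integrals
`∫_{c_τ} (∇η) e^g` equals the boundary terms taken only at the endpoints inside `U`. -/
theorem stmt5 (U : Set ℂ) (hU : IsOpen U) (g η : ℂ → ℂ)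
    (hg : DifferentiableOn ℂ g U) (hη : DifferentiableOn ℂ η U)
    (c : ℝ → ℂ) (hcU : ∀ t ∈ Ioo (0:ℝ) 1, c t ∈ U)
    (cτ cτ' : ℝ → ℝ → ℂ)
    (hτU : ∀ τ ∈ Ioc (0:ℝ) 1, ∀ t ∈ Icc (0:ℝ) 1, cτ τ t ∈ U)
    (hτderiv : ∀ τ ∈ Ioc (0:ℝ) 1, ∀ t ∈ Icc (0:ℝ) 1, HasDerivAt (cτ τ) (cτ' τ t) t)
    (hτcont : ∀ τ ∈ Ioc (0:ℝ) 1, ContinuousOn (cτ' τ) (Icc 0 1))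
    (hunif : TendstoUniformlyOn (fun τ => cτ τ) c (nhdsWithin 0 (Ioc 0 1)) (Icc 0 1))
    (hend : ∀ i ∈ ({0, 1} : Set ℝ),
      Tendsto (fun τ => cτ τ i) (nhdsWithin 0 (Ioc 0 1)) (nhds (c i)))
    (hin : ∀ i ∈ ({0, 1} : Set ℝ), c i ∈ U ∨ c i ∈ frontier U)
    (hvanish : ∀ i ∈ ({0, 1} : Set ℝ), c i ∈ frontier U →
      Tendsto (fun τ => η (cτ τ i) * Complex.exp (g (cτ τ i)))
        (nhdsWithin 0 (Ioc 0 1)) (nhds 0))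
    (L : ℂ)
    (hlim : Tendsto (fun τ => ∫ t in (0:ℝ)..1,
        (deriv η (cτ τ t) + deriv g (cτ τ t) * η (cτ τ t)) *
          Complex.exp (g (cτ τ t)) * cτ' τ t)
      (nhdsWithin 0 (Ioc 0 1)) (nhds L)) :
    L = Set.indicator U (fun z => η z * Complex.exp (g z)) (c 1)
      - Set.indicator U (fun z => η z * Complex.exp (g z)) (c 0) :=
  stmt5_general U hU g η hg hη c cτ cτ' hτU hτderiv hτcont hend hin hvanish L hlim
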